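/- Let F : ℝⁿ → ℝ be twice continuously differentiable with Hessian ∇²F satisfying m‖x‖² ≤ xᵀ ∇²F(y) x for all x, y ∈ ℝⁿ (with m > 0) and the Lipschitz bound ‖∇²F(x) − ∇²F(y)‖₂ ≤ L‖x − y‖ in the operator norm. Let χ : ℝⁿ → ℝ be convex, C ⊆ ℝⁿ a convex set, and suppose u* minimizes F + χ over C. For u ∈ ℝⁿ set H = ∇²F(u) and let u⁺ minimize z ↦ (1/2)‖z − (u − H⁻¹ ∇F(u))‖²_H + χ(z) over C (the proximal Newton step with unit step size). Then the step is locally quadratically convergent: ‖u⁺ − u*‖ ≤ (L/(2m)) ‖u − u*‖². -/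

import Mathlib

open Matrix

/-- The squared `H`-norm `‖x‖²_H = xᵀ H x` on Euclidean space. -/
noncomputable def hNormSq {n : ℕ} (H : Matrix (Fin n) (Fin n) ℝ)
    (x : EuclideanSpace ℝ (Fin n)) : ℝ :=
  inner ℝ x (Matrix.toEuclideanLin H x)

/-! Both `u⁺` and `u*` minimize a differentiable function plus the convex `χ` over `C`, so each
satisfies a first-order variational inequality. Adding the two, the `χ` terms cancel and, since
`H(u⁺ - v) = H(u⁺ - u) + ∇F(u)` for the Newton point `v = u - H⁻¹∇F(u)`, one gets
`‖u⁺ - u*‖²_H ≤ ⟪∇F(u*) - ∇F(u) - H(u* - u), u⁺ - u*⟫`. Strong convexity bounds the left side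
below by `m‖u⁺ - u*‖²`, and the Lipschitz Hessian bounds the Taylor remainder on the right by
`(L/2)‖u - u*‖²`. -/

open Set
open scoped RealInnerProductSpace

section InnerProductSpace

variable {E : Type*} [NormedAddCommGroup E] [InnerProductSpace ℝ E]

theorem IsMinOn.sub_le_inner_of_hasGradientAt [CompleteSpace E] {f χ : E → ℝ} {C : Set E}
    {x z g : E} (hmin : IsMinOn (fun y => f y + χ y) C x) (hχ : ConvexOn ℝ C χ)
    (hf : HasGradientAt f g x) (hx : x ∈ C) (hz : z ∈ C) :
    χ x - χ z ≤ ⟪g, z - x⟫ := by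
  -- along the segment `χ` is replaced by its chord, which is differentiable in `t`
  set φ : ℝ → ℝ := fun t => f (x + t • (z - x)) + t * (χ z - χ x)
  have hφ_min : IsMinOn φ (Icc 0 1) 0 := isMinOn_iff.2 fun t ht => by
    have hmem : x + t • (z - x) ∈ C := hχ.1.add_smul_sub_mem hx hz ht
    have hconv : χ (x + t • (z - x)) ≤ (1 - t) * χ x + t * χ z := by
      have := hχ.2 hx hz (sub_nonneg.2 ht.2) ht.1 (sub_add_cancel 1 t)
      rwa [show (1 - t) • x + t • z = x + t • (z - x) by module] at this
    have := isMinOn_iff.1 hmin _ hmem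
    simp only [φ, zero_smul, add_zero, zero_mul]
    linarith
  have hφ_deriv : HasDerivAt φ (⟪g, z - x⟫ + (χ z - χ x)) 0 := by
    have hline : HasDerivAt (fun t : ℝ => x + t • (z - x)) (z - x) 0 := by
      simpa using ((hasDerivAt_id (0 : ℝ)).smul_const (z - x)).const_add x
    have hf' : HasFDerivAt f (InnerProductSpace.toDual ℝ E g) (x + (0 : ℝ) • (z - x)) := by
      simpa using hf.hasFDerivAt
    exact ((hf'.comp_hasDerivAt (0 : ℝ) hline).add
      ((hasDerivAt_id' (0 : ℝ)).mul_const (χ z - χ x))).congr_deriv (by simp)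
  have hone : (1 : ℝ) ∈ posTangentConeAt (Icc 0 1) 0 :=
    mem_posTangentConeAt_of_segment_subset (by simp [segment_eq_Icc])
  have hφ'_nonneg :=
    hφ_min.localize.hasFDerivWithinAt_nonneg hφ_deriv.hasFDerivAt.hasFDerivWithinAt hone
  simp only [ContinuousLinearMap.toSpanSingleton_apply, one_smul] at hφ'_nonneg
  linarith

theorem hasGradientAt_half_inner_sub_apply_sub [CompleteSpace E] {T : E →L[ℝ] E}
    (hT : (T : E →ₗ[ℝ] E).IsSymmetric) (v x : E) :
    HasGradientAt (fun z => 1 / 2 * ⟪z - v, T (z - v)⟫) (T (x - v)) x := by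
  rw [hasGradientAt_iff_hasFDerivAt]
  have hsub : HasFDerivAt (fun z : E => z - v) (ContinuousLinearMap.id ℝ E) x :=
    (hasFDerivAt_id x).sub_const v
  refine ((hsub.inner ℝ (T.hasFDerivAt.comp x hsub)).const_mul (1 / 2 : ℝ)).congr_fderiv ?_
  ext h
  have hsymm : ⟪T (x - v), h⟫ = ⟪x - v, T h⟫ := hT (x - v) h
  simp only [one_div, Function.comp_apply, map_sub, ContinuousLinearMap.comp_id,
    _root_.smul_apply, ContinuousLinearMap.comp_apply, ContinuousLinearMap.prod_apply,
    ContinuousLinearMap.id_apply, fderivInnerCLM_apply, smul_eq_mul, _root_.sub_apply,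
    InnerProductSpace.toDual_apply_apply]
  rw [← inner_sub_left, ← map_sub, real_inner_comm (T (x - v)) h, ← hsymm]
  ring

theorem norm_sub_le_div_of_variational_inequalities {T : E →ₗ[ℝ] E} {m : ℝ} (hm : 0 < m)
    (hT : ∀ x, m * ‖x‖ ^ 2 ≤ ⟪x, T x⟫) {χ : E → ℝ} {u uplus ustar g gstar : E}
    (hplus : χ uplus - χ ustar ≤ ⟪T (uplus - u) + g, ustar - uplus⟫)
    (hstar : χ ustar - χ uplus ≤ ⟪gstar, uplus - ustar⟫) :
    ‖uplus - ustar‖ ≤ ‖gstar - g - T (ustar - u)‖ / m := by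
  set d := uplus - ustar
  have hsplit : T (uplus - u) = T d + T (ustar - u) := by
    simp only [d, ← map_add, sub_add_sub_cancel]
  have hkey : m * ‖d‖ ^ 2 ≤ ‖gstar - g - T (ustar - u)‖ * ‖d‖ := calc
    m * ‖d‖ ^ 2 ≤ ⟪d, T d⟫ := hT d
    _ ≤ ⟪gstar - g - T (ustar - u), d⟫ := by
      have hneg : ustar - uplus = -d := (neg_sub _ _).symm
      rw [hsplit, hneg, inner_neg_right] at hplus
      simp only [inner_add_left, inner_sub_left] at hplus ⊢
      linarith [real_inner_comm d (T d)]
    _ ≤ ‖gstar - g - T (ustar - u)‖ * ‖d‖ := real_inner_le_norm _ _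
  rw [le_div_iff₀ hm]
  rcases (norm_nonneg d).eq_or_lt' with hd | hd
  · rw [hd, zero_mul]; exact norm_nonneg _
  · nlinarith

theorem LinearMap.injective_of_coercive {T : E →ₗ[ℝ] E} {m : ℝ} (hm : 0 < m)
    (hT : ∀ x, m * ‖x‖ ^ 2 ≤ ⟪x, T x⟫) : Function.Injective T := by
  refine (injective_iff_map_eq_zero T).2 fun x hx => ?_
  have := hT x
  rw [hx, inner_zero_right] at this
  simpa using nonpos_of_mul_nonpos_right this hm

end InnerProductSpace

theorem norm_sub_sub_apply_le_of_lipschitz_fderiv {E F : Type*} [NormedAddCommGroup E]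
    [NormedSpace ℝ E] [NormedAddCommGroup F] [NormedSpace ℝ F] {g : E → F} {A : E → E →L[ℝ] F}
    {L : ℝ} {p : E} (hg : ∀ y, HasFDerivAt g (A y) y) (hA : ∀ y, ‖A y - A p‖ ≤ L * ‖y - p‖)
    (q : E) : ‖g q - g p - A p (q - p)‖ ≤ L / 2 * ‖q - p‖ ^ 2 := by
  set d := q - p
  set φ : ℝ → F := fun t => g (p + t • d) - g p - t • A p d
  have hφ : ∀ t : ℝ, HasDerivAt φ (A (p + t • d) d - A p d) t := fun t => by
    have hline : HasDerivAt (fun s : ℝ => p + s • d) d t := by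
      simpa using ((hasDerivAt_id t).smul_const d).const_add p
    exact (((hg _).comp_hasDerivAt t hline).sub_const (g p)).sub
      (by simpa using (hasDerivAt_id t).smul_const (A p d))
  have hB : ∀ t : ℝ, HasDerivAt (fun t : ℝ => L / 2 * ‖d‖ ^ 2 * t ^ 2) (L * ‖d‖ ^ 2 * t) t :=
    fun t => ((hasDerivAt_pow 2 t).const_mul (L / 2 * ‖d‖ ^ 2)).congr_deriv (by simp; ring)
  have hbound : ∀ t ∈ Ico (0 : ℝ) 1, ‖A (p + t • d) d - A p d‖ ≤ L * ‖d‖ ^ 2 * t := by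
    intro t ht
    calc ‖A (p + t • d) d - A p d‖ ≤ ‖A (p + t • d) - A p‖ * ‖d‖ :=
          (A (p + t • d) - A p).le_opNorm d
      _ ≤ L * ‖t • d‖ * ‖d‖ := by
          gcongr; simpa using hA (p + t • d)
      _ = L * ‖d‖ ^ 2 * t := by rw [norm_smul, Real.norm_of_nonneg ht.1]; ring
  have := image_norm_le_of_norm_deriv_right_le_deriv_boundary
    (fun t _ => (hφ t).continuousAt.continuousWithinAt) (fun t _ => (hφ t).hasDerivWithinAt)
    (by simp [φ]) hB hbound (right_mem_Icc.2 zero_le_one)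
  simpa [φ, d] using this

namespace Matrix

variable {ι 𝕜 : Type*} [Fintype ι] [DecidableEq ι] [RCLike 𝕜]

theorem isUnit_det_of_injective_toEuclideanLin {H : Matrix ι ι 𝕜}
    (hH : Function.Injective (toEuclideanLin H)) : IsUnit H.det := by
  rw [← isUnit_iff_isUnit_det, ← mulVec_injective_iff_isUnit]
  intro a b hab
  simpa using @hH (WithLp.toLp 2 a) (WithLp.toLp 2 b) (by simp [toLpLin_apply, hab])

theorem toEuclideanLin_apply_toEuclideanLin_inv {H : Matrix ι ι 𝕜} (hH : IsUnit H.det)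
    (x : EuclideanSpace 𝕜 ι) : toEuclideanLin H (toEuclideanLin H⁻¹ x) = x := by
  rw [← LinearMap.comp_apply, ← toLpLin_mul_same, mul_nonsing_inv _ hH, toLpLin_one,
    LinearMap.id_apply]

end Matrix

theorem prox_newton_quadratic_convergence_general (n : ℕ)
    (F : EuclideanSpace ℝ (Fin n) → ℝ) (hF : ContDiff ℝ 2 F)
    (Hess : EuclideanSpace ℝ (Fin n) → Matrix (Fin n) (Fin n) ℝ)
    (hHessSymm : ∀ y, (Hess y).IsSymm)
    (hHessDeriv : ∀ y, HasFDerivAt (gradient F)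
      (LinearMap.toContinuousLinearMap (Matrix.toEuclideanLin (Hess y))) y)
    (m L : ℝ) (hm : 0 < m)
    (hstrong : ∀ x y : EuclideanSpace ℝ (Fin n), m * ‖x‖ ^ 2 ≤ hNormSq (Hess y) x)
    (hLip : ∀ x y : EuclideanSpace ℝ (Fin n),
      ‖LinearMap.toContinuousLinearMap (Matrix.toEuclideanLin (Hess x)) -
          LinearMap.toContinuousLinearMap (Matrix.toEuclideanLin (Hess y))‖ ≤
        L * ‖x - y‖)
    (χ : EuclideanSpace ℝ (Fin n) → ℝ) (hχ : ConvexOn ℝ Set.univ χ)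
    (C : Set (EuclideanSpace ℝ (Fin n))) (hC : Convex ℝ C)
    (ustar : EuclideanSpace ℝ (Fin n)) (hustarC : ustar ∈ C)
    (hustar : ∀ z ∈ C, F ustar + χ ustar ≤ F z + χ z)
    (u uplus : EuclideanSpace ℝ (Fin n)) (huplusC : uplus ∈ C)
    (huplus : ∀ z ∈ C,
      (1 / 2) * hNormSq (Hess u)
          (uplus - (u - Matrix.toEuclideanLin (Hess u)⁻¹ (gradient F u))) + χ uplus ≤
        (1 / 2) * hNormSq (Hess u)
          (z - (u - Matrix.toEuclideanLin (Hess u)⁻¹ (gradient F u))) + χ z) :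
    ‖uplus - ustar‖ ≤ L / (2 * m) * ‖u - ustar‖ ^ 2 := by
  set T := Matrix.toEuclideanLin (Hess u)
  have hχC : ConvexOn ℝ C χ := hχ.subset (subset_univ C) hC
  have hT_symm : T.IsSymmetric := by simpa [T] using hHessSymm u
  have hdet : IsUnit (Hess u).det :=
    Matrix.isUnit_det_of_injective_toEuclideanLin
      (LinearMap.injective_of_coercive hm fun x => hstrong x u)
  have hplus : χ uplus - χ ustar ≤ ⟪T (uplus - u) + gradient F u, ustar - uplus⟫ := by
    have := (isMinOn_iff.2 huplus).sub_le_inner_of_hasGradientAt hχC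
      (hasGradientAt_half_inner_sub_apply_sub (T := LinearMap.toContinuousLinearMap T)
        hT_symm _ uplus) huplusC hustarC
    rwa [LinearMap.coe_toContinuousLinearMap', sub_sub_eq_add_sub, add_sub_right_comm, map_add,
      Matrix.toEuclideanLin_apply_toEuclideanLin_inv hdet] at this
  have hstar : χ ustar - χ uplus ≤ ⟪gradient F ustar, uplus - ustar⟫ :=
    (isMinOn_iff.2 hustar).sub_le_inner_of_hasGradientAt hχC
      (hF.differentiable two_ne_zero ustar).hasGradientAt hustarC huplusC
  have htaylor := norm_sub_sub_apply_le_of_lipschitz_fderiv hHessDeriv (fun y => hLip y u) ustar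
  calc ‖uplus - ustar‖ ≤ ‖gradient F ustar - gradient F u - T (ustar - u)‖ / m :=
        norm_sub_le_div_of_variational_inequalities hm (fun x => hstrong x u) hplus hstar
    _ ≤ L / 2 * ‖ustar - u‖ ^ 2 / m := by gcongr; exact htaylor
    _ = L / (2 * m) * ‖u - ustar‖ ^ 2 := by rw [norm_sub_rev]; ring

/-- Local quadratic convergence of the proximal Newton step with unit step size. Let `F`
be `C²` with Hessian `∇²F` (given as a matrix-valued map `Hess`, the derivative of the
gradient), satisfying `m‖x‖² ≤ xᵀ ∇²F(y) x` for all `x, y` (with `m > 0`) and the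
Lipschitz bound `‖∇²F(x) − ∇²F(y)‖₂ ≤ L‖x − y‖` in the operator norm. Let `χ` be convex,
`C` convex, `u*` a minimizer of `F + χ` over `C`, and for `u ∈ ℝⁿ` put `H = ∇²F(u)` and
let `u⁺` minimize `z ↦ (1/2)‖z − (u − H⁻¹∇F(u))‖²_H + χ(z)` over `C`. Then
`‖u⁺ − u*‖ ≤ (L/(2m))‖u − u*‖²`. -/
theorem prox_newton_quadratic_convergence (n : ℕ)
    (F : EuclideanSpace ℝ (Fin n) → ℝ) (hF : ContDiff ℝ 2 F)
    (Hess : EuclideanSpace ℝ (Fin n) → Matrix (Fin n) (Fin n) ℝ)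
    (hHessSymm : ∀ y, (Hess y).IsSymm)
    (hHessDeriv : ∀ y, HasFDerivAt (gradient F)
      (LinearMap.toContinuousLinearMap (Matrix.toEuclideanLin (Hess y))) y)
    (m L : ℝ) (hm : 0 < m) (hL : 0 ≤ L)
    (hstrong : ∀ x y : EuclideanSpace ℝ (Fin n), m * ‖x‖ ^ 2 ≤ hNormSq (Hess y) x)
    (hLip : ∀ x y : EuclideanSpace ℝ (Fin n),
      ‖LinearMap.toContinuousLinearMap (Matrix.toEuclideanLin (Hess x)) -
          LinearMap.toContinuousLinearMap (Matrix.toEuclideanLin (Hess y))‖ ≤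
        L * ‖x - y‖)
    (χ : EuclideanSpace ℝ (Fin n) → ℝ) (hχ : ConvexOn ℝ Set.univ χ)
    (C : Set (EuclideanSpace ℝ (Fin n))) (hC : Convex ℝ C)
    (ustar : EuclideanSpace ℝ (Fin n)) (hustarC : ustar ∈ C)
    (hustar : ∀ z ∈ C, F ustar + χ ustar ≤ F z + χ z)
    (u uplus : EuclideanSpace ℝ (Fin n)) (huplusC : uplus ∈ C)
    (huplus : ∀ z ∈ C,
      (1 / 2) * hNormSq (Hess u)
          (uplus - (u - Matrix.toEuclideanLin (Hess u)⁻¹ (gradient F u))) + χ uplus ≤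
        (1 / 2) * hNormSq (Hess u)
          (z - (u - Matrix.toEuclideanLin (Hess u)⁻¹ (gradient F u))) + χ z) :
    ‖uplus - ustar‖ ≤ L / (2 * m) * ‖u - ustar‖ ^ 2 :=
  prox_newton_quadratic_convergence_general n F hF Hess hHessSymm hHessDeriv m L hm hstrong hLip χ
    hχ C hC ustar hustarC hustar u uplus huplusC huplus
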